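/- For any finitely presented R-module A and pure acyclic complex F• of R-modules, every chain map A[-n] → F• (A concentrated in degree n) is null-homotopic, for every integer n. -/

import Mathlib

/-!
Write `A = R^k / ⟨s_1, …, s_m⟩`. A map `g : A → Z^n = d(F^{n-1})` lifts through `d` on the free
module `R^k`, and the lift `h₀` sends each relation `s_j` into `K = ker d^{n-1}`. Purity of `K`
says that a finite linear system `∑ᵢ s_{ji} yᵢ = bⱼ` with `bⱼ ∈ K` which is solvable in `F^{n-1}`
is already solvable in `K`: tensoring the presentation `R^k → R^m → X → 0` of the cokernel `X`
of the relation matrix with `K ⊆ F^{n-1}` turns solvability into the vanishing of an element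
of `K ⊗ X`, which is detected in `F^{n-1} ⊗ X`. Correcting `h₀` by such a solution kills the
relations, so `g` lifts to `ℓ : A → F^{n-1}`, and `ℓ` is the null-homotopy.
-/

open CategoryTheory Limits TensorProduct

/-- A cochain complex of modules is exact. -/
def CxExact (R : Type) [CommRing R] (C : CochainComplex (ModuleCat R) ℤ) : Prop :=
  ∀ n : ℤ, LinearMap.range (C.d (n - 1) n).hom = LinearMap.ker (C.d n (n + 1)).hom

/-- A cochain complex of modules is pure acyclic: it is exact and each cycle
short exact sequence `0 → Z^n → C^n → Z^{n+1} → 0` is pure exact, i.e. the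
inclusion `Z^n → C^n` stays injective after tensoring with any module. -/
def PureAcyclic (R : Type) [CommRing R] (C : CochainComplex (ModuleCat R) ℤ) : Prop :=
  CxExact R C ∧
    ∀ (n : ℤ) (X : Type) [AddCommGroup X] [Module R X],
      Function.Injective (LinearMap.lTensor X (LinearMap.ker (C.d n (n + 1)).hom).subtype)

namespace TensorProduct

variable {R : Type*} [CommRing R] {N P : Type*} [AddCommGroup N] [Module R N]
  [AddCommGroup P] [Module R P] {ι κ : Type*} [Fintype ι] [DecidableEq ι]

lemma piScalarRight_rTensor (f : N →ₗ[R] P) (t : N ⊗[R] (ι → R)) :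
    piScalarRight R R P ι (f.rTensor _ t) = f ∘ piScalarRight R R N ι t := by
  induction t using TensorProduct.induction_on with
  | zero => ext; simp
  | tmul x v => ext; simp
  | add t t' ht ht' => simp only [map_add, ht, ht']; ext; simp

lemma piScalarRight_lTensor_mulVecLin [Fintype κ] [DecidableEq κ] (s : Matrix κ ι R)
    (t : N ⊗[R] (ι → R)) (j : κ) :
    piScalarRight R R N κ (s.mulVecLin.lTensor N t) j =
      ∑ i, s j i • piScalarRight R R N ι t i := by
  induction t using TensorProduct.induction_on with
  | zero => simp
  | tmul x v => simp [Matrix.mulVec, dotProduct, Finset.sum_smul, mul_smul]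
  | add t t' ht ht' => simp only [map_add, Pi.add_apply, ht, ht', smul_add, Finset.sum_add_distrib]

end TensorProduct

namespace Submodule

variable {R : Type} [CommRing R] {M : Type*} [AddCommGroup M] [Module R M]

def IsPure (K : Submodule R M) : Prop :=
  ∀ (X : Type) [AddCommGroup X] [Module R X], Function.Injective (K.subtype.lTensor X)

theorem IsPure.exists_sum_smul_eq {K : Submodule R M} (hK : K.IsPure)
    {ι κ : Type} [Fintype ι] [DecidableEq ι] [Fintype κ] [DecidableEq κ]
    (s : Matrix κ ι R) (b : κ → K) (x : ι → M) (hx : ∀ j, ∑ i, s j i • x i = b j) :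
    ∃ y : ι → K, ∀ j, ∑ i, s j i • y i = b j := by
  let X := (κ → R) ⧸ LinearMap.range s.mulVecLin
  let π := (LinearMap.range s.mulVecLin).mkQ
  have hexact : Function.Exact (s.mulVecLin.lTensor K) (π.lTensor K) :=
    lTensor_exact K (LinearMap.exact_map_mkQ_range _) (Submodule.mkQ_surjective _)
  let U := (piScalarRight R R K κ).symm b
  have hUM : K.subtype.rTensor (κ → R) U =
      s.mulVecLin.lTensor M ((piScalarRight R R M ι).symm x) := by
    apply (piScalarRight R R M κ).injective
    ext j
    rw [piScalarRight_rTensor, piScalarRight_lTensor_mulVecLin]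
    simp [U, hx]
  have hU : π.lTensor K U = 0 := by
    apply (LinearMap.lTensor_inj_iff_rTensor_inj _ _).mp (hK X)
    rw [map_zero, ← LinearMap.comp_apply, LinearMap.rTensor_comp_lTensor,
      ← LinearMap.lTensor_comp_rTensor, LinearMap.comp_apply, hUM, ← LinearMap.comp_apply,
      ← LinearMap.lTensor_comp, LinearMap.range_mkQ_comp,
      LinearMap.lTensor_zero, LinearMap.zero_apply]
  obtain ⟨w, hw⟩ := (hexact U).mp hU
  refine ⟨piScalarRight R R K ι w, fun j => ?_⟩
  rw [← piScalarRight_lTensor_mulVecLin, hw, LinearEquiv.apply_symm_apply]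

end Submodule

namespace LinearMap

variable {R : Type} [CommRing R] {M N A : Type*} [AddCommGroup M] [Module R M]
  [AddCommGroup N] [Module R N] [AddCommGroup A] [Module R A]

theorem exists_comp_eq_of_isPure_ker [Module.FinitePresentation R A] (p : M →ₗ[R] N)
    (hp : (ker p).IsPure) (g : A →ₗ[R] N) (hg : range g ≤ range p) :
    ∃ h : A →ₗ[R] M, p ∘ₗ h = g := by
  obtain ⟨k, π, hπ⟩ := Module.Finite.exists_fin' R A
  obtain ⟨m, s, hs⟩ := Submodule.fg_iff_exists_fin_generating_family.mp
    (Module.FinitePresentation.fg_ker π hπ)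
  have hsπ : ∀ j, π (s j) = 0 := fun j => by
    rw [← mem_ker, ← hs]; exact Submodule.subset_span ⟨j, rfl⟩
  choose x hx using fun i : Fin k => hg (mem_range_self g (π (Pi.single i 1)))
  let h₀ := Fintype.linearCombination R x
  have hph₀ : p ∘ₗ h₀ = g ∘ₗ π := pi_ext' fun i => by ext; simp [h₀, hx]
  have hb : ∀ j, h₀ (s j) ∈ ker p := fun j => by
    rw [mem_ker, ← comp_apply, hph₀, comp_apply, hsπ, map_zero]
  obtain ⟨y, hy⟩ := hp.exists_sum_smul_eq (Matrix.of s)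
    (fun j => ⟨h₀ (s j), hb j⟩) x fun j => by
      simp [h₀, Fintype.linearCombination_apply]
  let h₁ := h₀ - (ker p).subtype ∘ₗ Fintype.linearCombination R y
  have hker : ker π ≤ ker h₁ := by
    rw [← hs, Submodule.span_le]
    rintro _ ⟨j, rfl⟩
    have hyj : ∑ i, s j i • (y i : M) = h₀ (s j) := by simpa using congrArg Subtype.val (hy j)
    simp [h₁, Fintype.linearCombination_apply, hyj]
  have hph₁ : p ∘ₗ h₁ = g ∘ₗ π := by
    rw [comp_sub, ← comp_assoc, comp_ker_subtype, zero_comp, sub_zero, hph₀]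
  refine ⟨(ker π).liftQ h₁ hker ∘ₗ (π.quotKerEquivOfSurjective hπ).symm.toLinearMap, ?_⟩
  ext a
  obtain ⟨v, rfl⟩ := hπ a
  simpa using LinearMap.congr_fun hph₁ v

end LinearMap

namespace CochainComplex

variable {V : Type*} [Category V] [Preadditive V] [HasZeroObject V]

lemma nonempty_homotopy_zero_of_single_factors_d {K : CochainComplex V ℤ} {n : ℤ} {A : V}
    (f : (HomologicalComplex.single V (ComplexShape.up ℤ) n).obj A ⟶ K) (ℓ : A ⟶ K.X (n - 1))
    (hℓ : ℓ ≫ K.d (n - 1) n = (HomologicalComplex.singleObjXSelf _ n A).inv ≫ f.f n) :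
    Nonempty (Homotopy f 0) := by
  let h : ∀ i j, (ComplexShape.up ℤ).Rel j i →
      (((HomologicalComplex.single V (ComplexShape.up ℤ) n).obj A).X i ⟶ K.X j) :=
    fun i j hji => if hi : i = n then
      (HomologicalComplex.singleObjXIsoOfEq _ n A i hi).hom ≫ ℓ ≫
        (K.XIsoOfEq (show n - 1 = j by simp at hji; omega)).hom
    else 0
  suffices f = Homotopy.nullHomotopicMap' h from ⟨this ▸ Homotopy.nullHomotopy' h⟩
  ext : 1
  rw [Homotopy.nullHomotopicMap'_f (show (ComplexShape.up ℤ).Rel (n - 1) n by simp)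
    (show (ComplexShape.up ℤ).Rel n (n + 1) by simp)]
  simp [h, hℓ, HomologicalComplex.singleObjXSelf, HomologicalComplex.singleObjXIsoOfEq]

end CochainComplex

/-- For a finitely presented module `A` and a pure acyclic complex `F•`, every
chain map `A[-n] → F•` (with `A` concentrated in degree `n`) is null-homotopic. -/
theorem stmt_12 (R : Type) [CommRing R] (F : CochainComplex (ModuleCat R) ℤ)
    (hpa : PureAcyclic R F)
    (A : Type) [AddCommGroup A] [Module R A] (hA : Module.FinitePresentation R A) :
    ∀ (n : ℤ)
      (f : (HomologicalComplex.single (ModuleCat R) (ComplexShape.up ℤ) n).obj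
            (ModuleCat.of R A) ⟶ F),
      Nonempty (Homotopy f 0) := by
  intro n f
  obtain ⟨hexact, hpure⟩ := hpa
  let g := ((HomologicalComplex.singleObjXSelf _ n (ModuleCat.of R A)).inv ≫ f.f n).hom
  have hg : LinearMap.range g ≤ LinearMap.range (F.d (n - 1) n).hom := by
    rintro _ ⟨a, rfl⟩
    have hcycle : f.f n ≫ F.d n (n + 1) = 0 := by
      rw [f.comm, HomologicalComplex.single_obj_d, zero_comp]
    rw [hexact n, LinearMap.mem_ker, ← LinearMap.comp_apply, ← ModuleCat.hom_comp,
      Category.assoc, hcycle, comp_zero, ModuleCat.hom_zero, LinearMap.zero_apply]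
  have hker : (LinearMap.ker (F.d (n - 1) n).hom).IsPure := by
    have := hpure (n - 1)
    rwa [sub_add_cancel] at this
  obtain ⟨h, hh⟩ := LinearMap.exists_comp_eq_of_isPure_ker _ hker g hg
  exact CochainComplex.nonempty_homotopy_zero_of_single_factors_d f (ModuleCat.ofHom h)
    (ModuleCat.hom_ext hh)
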